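/- Let g : Z × X → Y satisfy ‖g(z₁,x₁) − g(z₂,x₂)‖ ≤ K_θ(‖z₁−z₂‖ + ‖x₁−x₂‖) for some K_θ > 0, and let μ : X × Y → ℝ^d and σ : X × Y → ℝ^d (σ componentwise nonnegative) satisfy ‖μ(x₁,y₁) − μ(x₂,y₂)‖² + ‖σ(x₁,y₁) − σ(x₂,y₂)‖² ≤ K_φ²(‖x₁−x₂‖ + ‖y₁−y₂‖)² for some K_φ > 0, and write q(x,y) := N(μ(x,y), diag σ(x,y)²). Then for all x₁, x₂ ∈ X and y₁, y₂ ∈ Y, and for every function f : Z × X → ℝ that is integrable against the relevant measures and satisfies |f(z,x) − f(z',x')| ≤ K_θ(‖z−z'‖ + ‖x−x'‖) for all z,z',x,x', one has | E_{z∼q(x₁,y₁)} f(z,x₁) − E_{z∼q(x₂,y₂)} f(z,x₂) | ≤ K_φ K_θ (‖x₁−x₂‖ + ‖y₁−y₂‖) + K_θ ‖x₁−x₂‖. -/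

import Mathlib

open MeasureTheory ProbabilityTheory

/-- The diagonal Gaussian measure `N(μ, diag σ²)` on `ℝ^d`: the product of the
one-dimensional Gaussians with mean `μ i` and variance `(σ i)²` (a Dirac mass
whenever `σ i = 0`). -/
noncomputable def gaussianPi {d : ℕ} (μ σ : EuclideanSpace ℝ (Fin d)) :
    Measure (EuclideanSpace ℝ (Fin d)) :=
  (Measure.pi fun i => gaussianReal (μ i) ⟨(σ i) ^ 2, sq_nonneg _⟩).map
    (MeasurableEquiv.toLp 2 (Fin d → ℝ))

/-! Both posteriors are images of one standard Gaussian vector `ε` under the reparametrizations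
`Tⱼ ε = μⱼ + σⱼ ⊙ ε`, which couples them. Under this coupling the two integrands differ by at most
`K_θ (‖T₁ ε - T₂ ε‖ + ‖x₁ - x₂‖)`, and `T₁ ε - T₂ ε = Δμ + Δσ ⊙ ε` is again a diagonal Gaussian,
whose first absolute moment is at most `√(‖Δμ‖² + ‖Δσ‖²) ≤ K_φ (‖x₁ - x₂‖ + ‖y₁ - y₂‖)`. -/

open scoped NNReal

lemma integral_sq_gaussianReal (m : ℝ) (v : ℝ≥0) : ∫ x, x ^ 2 ∂gaussianReal m v = m ^ 2 + v := by
  have h := variance_eq_sub (memLp_id_gaussianReal' (μ := m) (v := v) 2 (by simp))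
  simp only [variance_id_gaussianReal, Pi.pow_apply, id_eq, integral_id_gaussianReal] at h
  linarith

lemma gaussianReal_map_const_add_mul (m : ℝ) (v : ℝ≥0) (a b : ℝ) :
    (gaussianReal m v).map (fun x => a + b * x) =
      gaussianReal (a + b * m) (.mk (b ^ 2) (sq_nonneg b) * v) := by
  have hcomp : (fun x : ℝ => a + b * x) = (a + ·) ∘ (b * ·) := rfl
  rw [hcomp, ← Measure.map_map (measurable_const_add a) (measurable_const_mul b),
    gaussianReal_map_const_mul, gaussianReal_map_const_add, add_comm]

lemma sq_integral_le_integral_sq {Ω : Type*} [MeasurableSpace Ω] {P : Measure Ω}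
    [IsProbabilityMeasure P] {X : Ω → ℝ} (hX : MemLp X 2 P) :
    (∫ ω, X ω ∂P) ^ 2 ≤ ∫ ω, X ω ^ 2 ∂P := by
  have h := variance_nonneg X P
  rw [variance_eq_sub hX] at h
  simp only [Pi.pow_apply] at h
  linarith

lemma abs_integral_map_sub_integral_map_le {Ω E : Type*} [MeasurableSpace Ω]
    [NormedAddCommGroup E] [MeasurableSpace E] {P : Measure Ω} [IsProbabilityMeasure P]
    {T₁ T₂ : Ω → E} (hT₁ : AEMeasurable T₁ P) (hT₂ : AEMeasurable T₂ P) {F₁ F₂ : E → ℝ}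
    (hF₁ : Integrable F₁ (P.map T₁)) (hF₂ : Integrable F₂ (P.map T₂))
    (hT : Integrable (fun ω => ‖T₁ ω - T₂ ω‖) P) {K c : ℝ}
    (hF : ∀ z z', |F₁ z - F₂ z'| ≤ K * (‖z - z'‖ + c)) :
    |(∫ z, F₁ z ∂P.map T₁) - ∫ z, F₂ z ∂P.map T₂| ≤ K * ((∫ ω, ‖T₁ ω - T₂ ω‖ ∂P) + c) := by
  have h₁ : Integrable (fun ω => F₁ (T₁ ω)) P := (integrable_map_measure hF₁.1 hT₁).mp hF₁
  have h₂ : Integrable (fun ω => F₂ (T₂ ω)) P := (integrable_map_measure hF₂.1 hT₂).mp hF₂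
  rw [integral_map hT₁ hF₁.1, integral_map hT₂ hF₂.1, ← integral_sub h₁ h₂]
  calc |∫ ω, F₁ (T₁ ω) - F₂ (T₂ ω) ∂P|
      ≤ ∫ ω, |F₁ (T₁ ω) - F₂ (T₂ ω)| ∂P := abs_integral_le_integral_abs
    _ ≤ ∫ ω, K * (‖T₁ ω - T₂ ω‖ + c) ∂P :=
        integral_mono (h₁.sub h₂).abs ((hT.add (integrable_const c)).const_mul K)
          fun ω => hF _ _
    _ = K * ((∫ ω, ‖T₁ ω - T₂ ω‖ ∂P) + c) := by
        rw [integral_const_mul, integral_add hT (integrable_const c), integral_const]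
        simp

section

variable {d : ℕ}

-- The variances `⟨σ i ^ 2, _⟩` in `gaussianPi` elaborate to a `Subtype.mk`, which the generic
-- `gaussianReal` instance does not unify with.
instance isProbabilityMeasure_gaussianReal_mk (m s : ℝ) (hs : 0 ≤ s) :
    IsProbabilityMeasure (gaussianReal m ⟨s, hs⟩) :=
  instIsProbabilityMeasureGaussianReal _ _

instance isProbabilityMeasure_gaussianPi (μ σ : EuclideanSpace ℝ (Fin d)) :
    IsProbabilityMeasure (gaussianPi μ σ) :=
  Measure.isProbabilityMeasure_map (MeasurableEquiv.toLp 2 (Fin d → ℝ)).measurable.aemeasurable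

noncomputable abbrev stdGaussianPi (d : ℕ) : Measure (Fin d → ℝ) :=
  Measure.pi fun _ => gaussianReal 0 1

def gaussianReparam (μ σ : EuclideanSpace ℝ (Fin d)) (ε : Fin d → ℝ) :
    EuclideanSpace ℝ (Fin d) :=
  WithLp.toLp 2 fun i => μ i + σ i * ε i

lemma measurable_gaussianReparam (μ σ : EuclideanSpace ℝ (Fin d)) :
    Measurable (gaussianReparam μ σ) :=
  (MeasurableEquiv.toLp 2 (Fin d → ℝ)).measurable.comp <|
    measurable_pi_lambda _ fun i => ((measurable_pi_apply i).const_mul _).const_add _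

lemma gaussianReparam_sub_gaussianReparam (μ₁ σ₁ μ₂ σ₂ : EuclideanSpace ℝ (Fin d))
    (ε : Fin d → ℝ) :
    gaussianReparam μ₁ σ₁ ε - gaussianReparam μ₂ σ₂ ε =
      gaussianReparam (μ₁ - μ₂) (σ₁ - σ₂) ε := by
  ext i
  simp only [gaussianReparam, PiLp.sub_apply]
  ring

lemma gaussianPi_eq_map_gaussianReparam (μ σ : EuclideanSpace ℝ (Fin d)) :
    gaussianPi μ σ = (stdGaussianPi d).map (gaussianReparam μ σ) := by
  have hcoord i : (gaussianReal 0 1).map (fun x => μ i + σ i * x) =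
      gaussianReal (μ i) ⟨σ i ^ 2, sq_nonneg _⟩ := by
    have h := gaussianReal_map_const_add_mul 0 1 (μ i) (σ i)
    simp only [mul_zero, add_zero, mul_one] at h
    exact h
  rw [gaussianPi, ← funext hcoord, ← Measure.pi_map_pi fun i => by fun_prop,
    Measure.map_map (MeasurableEquiv.toLp 2 (Fin d → ℝ)).measurable (by fun_prop)]
  rfl

lemma memLp_id_gaussianPi (μ σ : EuclideanSpace ℝ (Fin d)) : MemLp id 2 (gaussianPi μ σ) := by
  rw [memLp_two_iff_integrable_sq_norm aestronglyMeasurable_id, gaussianPi,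
    integrable_map_equiv]
  simp only [Function.comp_def, MeasurableEquiv.toLp_apply, EuclideanSpace.real_norm_sq_eq]
  exact integrable_finsetSum _ fun i _ =>
    integrable_comp_eval (f := fun x => x ^ 2) (memLp_id_gaussianReal' 2 (by simp)).integrable_sq

lemma integral_norm_sq_gaussianPi (μ σ : EuclideanSpace ℝ (Fin d)) :
    ∫ z, ‖z‖ ^ 2 ∂gaussianPi μ σ = ‖μ‖ ^ 2 + ‖σ‖ ^ 2 := by
  rw [gaussianPi, integral_map_equiv]
  simp only [MeasurableEquiv.toLp_apply, EuclideanSpace.real_norm_sq_eq]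
  rw [integral_finsetSum _ fun i _ => integrable_comp_eval (f := fun x => x ^ 2)
    (memLp_id_gaussianReal' 2 (by simp)).integrable_sq, ← Finset.sum_add_distrib]
  refine Finset.sum_congr rfl fun i _ => ?_
  rw [integral_comp_eval (f := fun x => x ^ 2) (by fun_prop)]
  exact integral_sq_gaussianReal _ _

lemma integral_norm_gaussianPi_le (μ σ : EuclideanSpace ℝ (Fin d)) :
    ∫ z, ‖z‖ ∂gaussianPi μ σ ≤ √(‖μ‖ ^ 2 + ‖σ‖ ^ 2) := by
  rw [← integral_norm_sq_gaussianPi]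
  exact Real.le_sqrt_of_sq_le (sq_integral_le_integral_sq (memLp_id_gaussianPi μ σ).norm)

lemma integrable_norm_gaussianReparam_sub (μ₁ σ₁ μ₂ σ₂ : EuclideanSpace ℝ (Fin d)) :
    Integrable (fun ε => ‖gaussianReparam μ₁ σ₁ ε - gaussianReparam μ₂ σ₂ ε‖)
      (stdGaussianPi d) := by
  have h := (memLp_id_gaussianPi (μ₁ - μ₂) (σ₁ - σ₂)).norm.integrable one_le_two
  rw [gaussianPi_eq_map_gaussianReparam, integrable_map_measure (by fun_prop)
    (measurable_gaussianReparam _ _).aemeasurable] at h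
  simpa only [Function.comp_def, id_eq, gaussianReparam_sub_gaussianReparam] using h

lemma integral_norm_gaussianReparam_sub (μ₁ σ₁ μ₂ σ₂ : EuclideanSpace ℝ (Fin d)) :
    ∫ ε, ‖gaussianReparam μ₁ σ₁ ε - gaussianReparam μ₂ σ₂ ε‖ ∂stdGaussianPi d =
      ∫ z, ‖z‖ ∂gaussianPi (μ₁ - μ₂) (σ₁ - σ₂) := by
  rw [gaussianPi_eq_map_gaussianReparam, integral_map
    (measurable_gaussianReparam _ _).aemeasurable (by fun_prop)]
  simp only [gaussianReparam_sub_gaussianReparam]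

end

theorem cvae_posterior_continuity_general {d m D : ℕ}
    (Kθ : ℝ) (hKθ : 0 < Kθ)
    (Kφ : ℝ) (hKφ : 0 < Kφ)
    (μe σe : EuclideanSpace ℝ (Fin m) → EuclideanSpace ℝ (Fin D) → EuclideanSpace ℝ (Fin d))
    (henc : ∀ (x₁ x₂ : EuclideanSpace ℝ (Fin m)) (y₁ y₂ : EuclideanSpace ℝ (Fin D)),
      ‖μe x₁ y₁ - μe x₂ y₂‖ ^ 2 + ‖σe x₁ y₁ - σe x₂ y₂‖ ^ 2 ≤
        Kφ ^ 2 * (‖x₁ - x₂‖ + ‖y₁ - y₂‖) ^ 2)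
    (x₁ x₂ : EuclideanSpace ℝ (Fin m)) (y₁ y₂ : EuclideanSpace ℝ (Fin D))
    (f : EuclideanSpace ℝ (Fin d) → EuclideanSpace ℝ (Fin m) → ℝ)
    (hf : ∀ (z z' : EuclideanSpace ℝ (Fin d)) (x x' : EuclideanSpace ℝ (Fin m)),
      |f z x - f z' x'| ≤ Kθ * (‖z - z'‖ + ‖x - x'‖))
    (hfint₁ : Integrable (fun z => f z x₁) (gaussianPi (μe x₁ y₁) (σe x₁ y₁)))
    (hfint₂ : Integrable (fun z => f z x₂) (gaussianPi (μe x₂ y₂) (σe x₂ y₂))) :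
    |(∫ z, f z x₁ ∂gaussianPi (μe x₁ y₁) (σe x₁ y₁)) -
        ∫ z, f z x₂ ∂gaussianPi (μe x₂ y₂) (σe x₂ y₂)| ≤
      Kφ * Kθ * (‖x₁ - x₂‖ + ‖y₁ - y₂‖) + Kθ * ‖x₁ - x₂‖ := by
  set s := ‖x₁ - x₂‖ + ‖y₁ - y₂‖
  have hcoupling : ∫ ε, ‖gaussianReparam (μe x₁ y₁) (σe x₁ y₁) ε -
      gaussianReparam (μe x₂ y₂) (σe x₂ y₂) ε‖ ∂stdGaussianPi d ≤ Kφ * s := by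
    rw [integral_norm_gaussianReparam_sub]
    refine (integral_norm_gaussianPi_le _ _).trans ?_
    calc √(‖μe x₁ y₁ - μe x₂ y₂‖ ^ 2 + ‖σe x₁ y₁ - σe x₂ y₂‖ ^ 2)
        ≤ √((Kφ * s) ^ 2) := Real.sqrt_le_sqrt ((henc x₁ x₂ y₁ y₂).trans_eq (mul_pow ..).symm)
      _ = Kφ * s := Real.sqrt_sq (by positivity)
  simp only [gaussianPi_eq_map_gaussianReparam] at hfint₁ hfint₂ ⊢
  calc _ ≤ Kθ * ((∫ ε, ‖gaussianReparam (μe x₁ y₁) (σe x₁ y₁) ε -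
          gaussianReparam (μe x₂ y₂) (σe x₂ y₂) ε‖ ∂stdGaussianPi d) + ‖x₁ - x₂‖) :=
        abs_integral_map_sub_integral_map_le (measurable_gaussianReparam _ _).aemeasurable
          (measurable_gaussianReparam _ _).aemeasurable hfint₁ hfint₂
          (integrable_norm_gaussianReparam_sub _ _ _ _) fun z z' => hf z z' x₁ x₂
    _ ≤ Kθ * (Kφ * s + ‖x₁ - x₂‖) := by gcongr
    _ = Kφ * Kθ * s + Kθ * ‖x₁ - x₂‖ := by ring

/-- **The CVAE posterior satisfies the continuity assumption** (first part of Lemma 2).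
If the decoder `g` satisfies `‖g(z₁,x₁) − g(z₂,x₂)‖ ≤ K_θ(‖z₁−z₂‖ + ‖x₁−x₂‖)` and the
encoder `(μ,σ)` satisfies `‖μ(x₁,y₁) − μ(x₂,y₂)‖² + ‖σ(x₁,y₁) − σ(x₂,y₂)‖² ≤
K_φ²(‖x₁−x₂‖ + ‖y₁−y₂‖)²`, then with `q(x,y) := N(μ(x,y), diag σ(x,y)²)`, for every
function `f : Z × X → ℝ` that is `K_θ`-Lipschitz with respect to the sum metric and
integrable against the relevant measures,
`|E_{z∼q(x₁,y₁)} f(z,x₁) − E_{z∼q(x₂,y₂)} f(z,x₂)| ≤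
  K_φ K_θ (‖x₁−x₂‖ + ‖y₁−y₂‖) + K_θ ‖x₁−x₂‖`. -/
theorem cvae_posterior_continuity {d m D : ℕ}
    (g : EuclideanSpace ℝ (Fin d) → EuclideanSpace ℝ (Fin m) → EuclideanSpace ℝ (Fin D))
    (Kθ : ℝ) (hKθ : 0 < Kθ)
    (hg : ∀ (z₁ z₂ : EuclideanSpace ℝ (Fin d)) (x₁ x₂ : EuclideanSpace ℝ (Fin m)),
      ‖g z₁ x₁ - g z₂ x₂‖ ≤ Kθ * (‖z₁ - z₂‖ + ‖x₁ - x₂‖))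
    (Kφ : ℝ) (hKφ : 0 < Kφ)
    (μe σe : EuclideanSpace ℝ (Fin m) → EuclideanSpace ℝ (Fin D) → EuclideanSpace ℝ (Fin d))
    (hσ : ∀ x y i, 0 ≤ σe x y i)
    (henc : ∀ (x₁ x₂ : EuclideanSpace ℝ (Fin m)) (y₁ y₂ : EuclideanSpace ℝ (Fin D)),
      ‖μe x₁ y₁ - μe x₂ y₂‖ ^ 2 + ‖σe x₁ y₁ - σe x₂ y₂‖ ^ 2 ≤
        Kφ ^ 2 * (‖x₁ - x₂‖ + ‖y₁ - y₂‖) ^ 2)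
    (x₁ x₂ : EuclideanSpace ℝ (Fin m)) (y₁ y₂ : EuclideanSpace ℝ (Fin D))
    (f : EuclideanSpace ℝ (Fin d) → EuclideanSpace ℝ (Fin m) → ℝ)
    (hf : ∀ (z z' : EuclideanSpace ℝ (Fin d)) (x x' : EuclideanSpace ℝ (Fin m)),
      |f z x - f z' x'| ≤ Kθ * (‖z - z'‖ + ‖x - x'‖))
    (hfint₁ : Integrable (fun z => f z x₁) (gaussianPi (μe x₁ y₁) (σe x₁ y₁)))
    (hfint₂ : Integrable (fun z => f z x₂) (gaussianPi (μe x₂ y₂) (σe x₂ y₂))) :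
    |(∫ z, f z x₁ ∂gaussianPi (μe x₁ y₁) (σe x₁ y₁)) -
        ∫ z, f z x₂ ∂gaussianPi (μe x₂ y₂) (σe x₂ y₂)| ≤
      Kφ * Kθ * (‖x₁ - x₂‖ + ‖y₁ - y₂‖) + Kθ * ‖x₁ - x₂‖ :=
  cvae_posterior_continuity_general Kθ hKθ Kφ hKφ μe σe henc x₁ x₂ y₁ y₂ f hf hfint₁ hfint₂
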